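/- arXiv:2307.10891 — 2 statements merged into one kernel-verified Lean document; each statement's English description precedes it below -/
import Mathlib

section
/- Semantic equivalence propagates through the whole network: Let N be a feedforward network with layers computed by z^{(ℓ+1)} = φ(W^{(ℓ)} z^{(ℓ)} + b^{(ℓ+1)}) and input z^{(0)} = x. Fix a layer ℓ, a neuron index i of layer ℓ, a basis B ⊆ {1,…,n_ℓ}\{i}, and coefficients α_j. Let Ñ be the network obtained by replacing in W^{(ℓ)} the column of i via W̃^{(ℓ)}_{·,j} = W^{(ℓ)}_{·,j} + α_j W^{(ℓ)}_{·,i} for j ∈ B and zeroing column i, leaving all other layers unchanged. If for every input x in a set X we have z^{(ℓ)}_i(x) = Σ_{j∈B} α_j z^{(ℓ)}_j(x), then N(x) = Ñ(x) for all x ∈ X. -/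
/-!
The modified weight matrix is a rank-one perturbation of the original one,
`W̃ = W + W_{·,i} ⊗ (α·1_B − e_i)`, and the linear relation among the neurons of layer `ℓ` says
exactly that the activation vector is orthogonal to `α·1_B − e_i`. Hence `W̃ z = W z`, so the
pre-activations of layer `ℓ+1`, and with them all later layers, coincide.
-/

namespace Matrix

variable {m n R : Type*}

theorem add_vecMulVec_mulVec_of_dotProduct_eq_zero [Fintype n] [Semiring R]
    (W : Matrix m n R) (u : m → R) {w v : n → R} (h : w ⬝ᵥ v = 0) :
    (W + vecMulVec u w) *ᵥ v = W *ᵥ v := by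
  rw [add_mulVec, vecMulVec_mulVec, h, MulOpposite.op_zero, zero_smul, add_zero]

theorem indicator_sub_single_dotProduct [Fintype n] [DecidableEq n] [Ring R]
    (B : Finset n) (α v : n → R) (i : n) :
    ((B : Set n).indicator α - Pi.single i 1) ⬝ᵥ v = ∑ j ∈ B, α j * v j - v i := by
  rw [sub_dotProduct, single_dotProduct, one_mul, dotProduct]
  congr 1
  simp only [Set.indicator_apply, Finset.mem_coe, ite_mul, zero_mul]
  rw [Finset.sum_ite_mem, Finset.univ_inter]

theorem eq_add_vecMulVec_of_redistribute_col [DecidableEq n] [CommRing R]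
    {W Wt : Matrix m n R} {i : n} {B : Finset n} (hiB : i ∉ B) {α : n → R}
    (hWt : ∀ r c, Wt r c =
      if c = i then 0 else if c ∈ B then W r c + α c * W r i else W r c) :
    Wt = W + vecMulVec (fun r => W r i) ((B : Set n).indicator α - Pi.single i 1) := by
  ext r c
  rw [hWt, add_apply, vecMulVec_apply, Pi.sub_apply]
  by_cases hc : c = i
  · subst hc
    simp [hiB]
  · by_cases hcB : c ∈ B <;> simp [hc, hcB, mul_comm]

end Matrix

open Matrix

/-- Semantic equivalence propagates through the whole network: if, on every input of `X`,
neuron `i` of layer `ℓ` equals the linear combination of the basis neurons, then replacing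
its outgoing column leaves the network's output unchanged on `X`.  Here `z` computes the
activations of layer `ℓ` of the original network (earlier layers are unchanged) and `T`
computes the remaining layers after layer `ℓ+1` (also unchanged). -/
theorem linear_abstraction_network_equiv {Input Output : Type*} {n m : ℕ}
    (X : Set Input)
    (z : Input → Fin n → ℝ)
    (φ : ℝ → ℝ) (W : Matrix (Fin m) (Fin n) ℝ) (b : Fin m → ℝ)
    (T : (Fin m → ℝ) → Output)
    (i : Fin n) (B : Finset (Fin n)) (hiB : i ∉ B) (α : Fin n → ℝ)
    (Wt : Matrix (Fin m) (Fin n) ℝ)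
    (hWt : ∀ r c, Wt r c =
      if c = i then 0 else if c ∈ B then W r c + α c * W r i else W r c)
    (N Nt : Input → Output)
    (hN : ∀ x, N x = T (fun r => φ ((W.mulVec (z x) + b) r)))
    (hNt : ∀ x, Nt x = T (fun r => φ ((Wt.mulVec (z x) + b) r)))
    (hlin : ∀ x ∈ X, z x i = ∑ j ∈ B, α j * z x j) :
    ∀ x ∈ X, N x = Nt x := by
  intro x hx
  have hpre : Wt *ᵥ z x = W *ᵥ z x := by
    rw [eq_add_vecMulVec_of_redistribute_col hiB hWt]
    apply add_vecMulVec_mulVec_of_dotProduct_eq_zero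
    rw [indicator_sub_single_dotProduct, ← hlin x hx, sub_self]
  rw [hN, hNt, hpre]
end

section
/- Zero projection error onto a basis implies perfect network reduction: Let N be a feedforward network and ℓ a layer with semantic matrix Z^{(ℓ)} over an input set X. If B ⊆ {1,…,n_ℓ} is such that every row Z^{(ℓ)}_{i,·} for i ∉ B lies in the span of {Z^{(ℓ)}_{j,·} : j ∈ B}, then there exists an abstracted network Ñ, obtained by replacing all neurons i ∉ B by linear combinations over B, such that Ñ(x) = N(x) for all x ∈ X. -/
/-!
On `X` each activation `z i` with `i ∉ B` equals `∑ t ∈ B, α i t * z t`, so the contribution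
`V r i * z i` of neuron `i` to the next pre-activation can be rerouted through the basis neurons
by adding `α i t * V r i` to the weight `V r t`. The next pre-activation, and hence everything
downstream of it, is then unchanged on `X`.
-/

open Finset Matrix

section LinearAbstraction

variable {R ι m : Type*} [CommSemiring R] [Fintype ι] [DecidableEq ι]

def abstractWeights (V : Matrix m ι R) (B : Finset ι) (α : ι → ι → R) : Matrix m ι R :=
  fun r t => if t ∈ B then V r t + ∑ i ∈ Bᶜ, α i t * V r i else 0

theorem abstractWeights_mulVec (V : Matrix m ι R) (B : Finset ι) (α : ι → ι → R) {w : ι → R}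
    (hw : ∀ i ∉ B, w i = ∑ t ∈ B, α i t * w t) :
    abstractWeights V B α *ᵥ w = V *ᵥ w := by
  ext r
  calc ∑ t, abstractWeights V B α r t * w t
      = ∑ t ∈ B, V r t * w t + ∑ t ∈ B, ∑ i ∈ Bᶜ, α i t * V r i * w t := by
        simp only [abstractWeights, ite_mul, zero_mul, sum_ite_mem, univ_inter, add_mul,
          sum_mul, sum_add_distrib]
    _ = ∑ t ∈ B, V r t * w t + ∑ i ∈ Bᶜ, V r i * w i := by
        rw [sum_comm]
        refine congrArg _ (sum_congr rfl fun i hi => ?_)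
        rw [hw i (mem_compl.mp hi), mul_sum]
        exact sum_congr rfl fun t _ => by ring
    _ = ∑ t, V r t * w t := sum_add_sum_compl B _

end LinearAbstraction

theorem exists_coeffs_of_mem_span_image {R ι S : Type*} [CommSemiring R] {v : ι → S → R}
    {B : Finset ι} {g : S → R} (hg : g ∈ Submodule.span R (v '' B)) :
    ∃ a : ι → R, ∀ s, g s = ∑ t ∈ B, a t * v t s := by
  obtain ⟨a, rfl⟩ := (Submodule.mem_span_image_finset_iff_exists_fun' R).mp hg
  exact ⟨a, fun s => by simp only [Finset.sum_apply, Pi.smul_apply, smul_eq_mul]⟩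

/-- Zero projection error onto a basis implies perfect network reduction: if every
non-basis row of the semantic matrix of layer `ℓ` (the activations `z x i` over inputs
`x ∈ X`) lies in the span of the basis rows, then there is an abstracted network,
obtained by replacing every neuron outside `B` by a linear combination over `B`,
agreeing with the original network on all of `X`.  Here `z` computes the layer-`ℓ`
activations, `V, c` is the outgoing affine map and `T` the rest of the network. -/
theorem zero_projection_error_perfect_reduction {Input Output : Type*} {n p : ℕ}
    (X : Set Input) (z : Input → Fin n → ℝ)
    (B : Finset (Fin n))
    (hspan : ∀ i ∉ B, (fun x : X => z x i) ∈
      Submodule.span ℝ ((fun j => (fun x : X => z x j)) '' (B : Set (Fin n))))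
    (V : Matrix (Fin p) (Fin n) ℝ) (c : Fin p → ℝ)
    (T : (Fin p → ℝ) → Output)
    (N : Input → Output) (hN : ∀ x, N x = T (V.mulVec (z x) + c)) :
    ∃ (α : Fin n → Fin n → ℝ) (Vt : Matrix (Fin p) (Fin n) ℝ),
      (∀ r t, Vt r t = if t ∈ B then V r t + ∑ i ∈ Bᶜ, α i t * V r i else 0) ∧
      ∀ x ∈ X, T (Vt.mulVec (z x) + c) = N x := by
  have hcoeffs : ∀ i, ∃ a : Fin n → ℝ, i ∉ B → ∀ x : X, z x i = ∑ t ∈ B, a t * z x t := by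
    intro i
    by_cases hi : i ∈ B
    · exact ⟨0, fun h => absurd hi h⟩
    · obtain ⟨a, ha⟩ := exists_coeffs_of_mem_span_image (hspan i hi)
      exact ⟨a, fun _ => ha⟩
  choose α hα using hcoeffs
  refine ⟨α, abstractWeights V B α, fun r t => rfl, fun x hx => ?_⟩
  rw [hN, abstractWeights_mulVec V B α fun i hi => hα i hi ⟨x, hx⟩]
end
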